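/- arXiv:1212.5933 — 2 statements merged into one kernel-verified Lean document; each statement's English description precedes it below -/
import Mathlib

section
/- Let G be a finite simple graph on Fin n, let d ≥ 1, r ≥ 1, and suppose there exists a fractional coloring of G of total weight at most d/r (i.e. χ_f(G) ≤ d/r). Then for every family Π : Fin n → Matrix (Fin d) (Fin d) ℂ of rank-r orthogonal projections realizing G, the vector x ∈ ℝ^n with components x_k = Re(tr(Π_k * ((1/d)·I))) lies in STAB(G); i.e., the maximally mixed state admits a noncontextual model for every such realization. -/
/-! In the maximally mixed state every rank-`r` projector has probability `tr Π / d = r / d`,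
so the vector in question is the constant `r / d`. A fractional coloring `w` of total weight
at most `d / r` gives the point `∑ (r / d) w_s 1_s` of STAB (the missing mass goes to the empty
set), and by the covering condition it dominates the constant vector `r / d`. Finally STAB is
down-closed in the nonnegative orthant: shrinking coordinate `v` of a vertex `1_s` interpolates
between `1_s` and `1_{s \ {v}}`, and independent sets are closed under deletion. -/

open Matrix
open scoped ComplexOrder

/-- A finset of vertices is independent: no two of its vertices are adjacent. -/
def IsIndep {n : ℕ} (G : SimpleGraph (Fin n)) (s : Finset (Fin n)) : Prop :=
  ∀ v ∈ s, ∀ u ∈ s, ¬ G.Adj v u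

/-- Incidence vector of a finset of vertices. -/
def incVec {n : ℕ} (s : Finset (Fin n)) : Fin n → ℝ := fun v => if v ∈ s then 1 else 0

/-- STAB(G): the convex hull of the incidence vectors of the independent sets of `G`. -/
def STAB {n : ℕ} (G : SimpleGraph (Fin n)) : Set (Fin n → ℝ) :=
  convexHull ℝ {x | ∃ s : Finset (Fin n), IsIndep G s ∧ x = incVec s}

/-- A fractional coloring of `G`: nonnegative weights supported on independent sets,
covering every vertex with total weight at least 1. -/
def IsFracColoring {n : ℕ} (G : SimpleGraph (Fin n)) (w : Finset (Fin n) → ℝ) : Prop :=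
  (∀ s, 0 ≤ w s) ∧ (∀ s, w s ≠ 0 → IsIndep G s) ∧
    (∀ v : Fin n, 1 ≤ ∑ s : Finset (Fin n), if v ∈ s then w s else 0)

/-- Total weight of a weight assignment on independent sets. -/
def totalWeight {n : ℕ} (w : Finset (Fin n) → ℝ) : ℝ := ∑ s : Finset (Fin n), w s

/-- `P` is an orthogonal projection of rank `r`: Hermitian, idempotent, of rank `r`. -/
def IsProjOfRank {d : ℕ} (r : ℕ) (P : Matrix (Fin d) (Fin d) ℂ) : Prop :=
  P.IsHermitian ∧ P * P = P ∧ P.rank = r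

/-- A family of projectors realizes the orthogonality graph `G`:
adjacent vertices carry orthogonal projectors. -/
def Realizes {n d : ℕ} (G : SimpleGraph (Fin n)) (P : Fin n → Matrix (Fin d) (Fin d) ℂ) : Prop :=
  ∀ j k, G.Adj j k → P j * P k = 0

theorem Matrix.trace_eq_rank_of_isIdempotentElem {K m : Type*} [Field K] [Fintype m]
    [DecidableEq m] {P : Matrix m m K} (hP : IsIdempotentElem P) : P.trace = P.rank := by
  have hlin : IsIdempotentElem (Matrix.toLin' P) := hP.map Matrix.toLinAlgEquiv'
  rw [← Matrix.trace_toLin'_eq, (LinearMap.IsIdempotentElem.isProj_range _ hlin).trace,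
    Matrix.rank, Matrix.toLin'_apply']

section STAB

variable {n : ℕ} {G : SimpleGraph (Fin n)}

lemma incVec_mem_STAB {s : Finset (Fin n)} (hs : IsIndep G s) : incVec s ∈ STAB G :=
  subset_convexHull ℝ _ ⟨s, hs, rfl⟩

lemma incVec_empty : incVec (∅ : Finset (Fin n)) = 0 := by
  ext v
  simp [incVec]

lemma IsIndep.erase {s : Finset (Fin n)} (hs : IsIndep G s) (v : Fin n) : IsIndep G (s.erase v) :=
  fun a ha b hb => hs a (Finset.mem_of_mem_erase ha) b (Finset.mem_of_mem_erase hb)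

lemma update_one_mul_incVec (s : Finset (Fin n)) (v : Fin n) (t : ℝ) :
    Function.update (1 : Fin n → ℝ) v t * incVec s =
      t • incVec s + (1 - t) • incVec (s.erase v) := by
  ext w
  rcases eq_or_ne w v with rfl | hwv
  · by_cases hw : w ∈ s <;> simp [incVec, hw]
  · by_cases hw : w ∈ s <;> simp [incVec, hw, hwv]

lemma update_one_mul_mem_STAB {x : Fin n → ℝ} (hx : x ∈ STAB G) (v : Fin n) {t : ℝ}
    (ht0 : 0 ≤ t) (ht1 : t ≤ 1) : Function.update (1 : Fin n → ℝ) v t * x ∈ STAB G := by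
  have himg : LinearMap.mulLeft ℝ (Function.update (1 : Fin n → ℝ) v t) x ∈
      LinearMap.mulLeft ℝ (Function.update (1 : Fin n → ℝ) v t) '' STAB G := ⟨x, hx, rfl⟩
  rw [STAB, LinearMap.image_convexHull] at himg
  refine convexHull_min ?_ (convex_convexHull ℝ _) himg
  rintro _ ⟨_, ⟨s, hs, rfl⟩, rfl⟩
  rw [LinearMap.mulLeft_apply, update_one_mul_incVec]
  exact convex_convexHull ℝ _ (incVec_mem_STAB hs) (incVec_mem_STAB (hs.erase v)) ht0
    (sub_nonneg.2 ht1) (add_sub_cancel _ _)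

lemma update_mem_STAB {x : Fin n → ℝ} (hx : x ∈ STAB G) {v : Fin n} {c : ℝ} (hc0 : 0 ≤ c)
    (hcx : c ≤ x v) : Function.update x v c ∈ STAB G := by
  have hx0 : 0 ≤ x v := hc0.trans hcx
  have hscale : Function.update (1 : Fin n → ℝ) v (c / x v) * x = Function.update x v c := by
    ext w
    rcases eq_or_ne w v with rfl | hwv
    · rcases hx0.eq_or_lt with hxw | hxw
      · simp [← hxw, le_antisymm (hxw ▸ hcx) hc0]
      · simp [hxw.ne']
    · simp [hwv]
  rw [← hscale]
  exact update_one_mul_mem_STAB hx v (div_nonneg hc0 hx0) (div_le_one_of_le₀ hcx hx0)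

lemma mem_STAB_of_le {y z : Fin n → ℝ} (hy : y ∈ STAB G) (hz0 : 0 ≤ z) (hzy : z ≤ y) :
    z ∈ STAB G := by
  classical
  suffices ∀ T : Finset (Fin n), T.piecewise z y ∈ STAB G by
    simpa using this Finset.univ
  intro T
  induction T using Finset.induction_on with
  | empty => simpa using hy
  | insert v T hvT ih =>
    rw [Finset.piecewise_insert]
    exact update_mem_STAB ih (hz0 v)
      (by simpa [Finset.piecewise_eq_of_notMem _ _ _ hvT] using hzy v)

lemma sum_smul_incVec_mem_STAB {a : Finset (Fin n) → ℝ} (ha0 : ∀ s, 0 ≤ a s)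
    (ha1 : ∑ s, a s ≤ 1) (hind : ∀ s, a s ≠ 0 → IsIndep G s) :
    ∑ s, a s • incVec s ∈ STAB G := by
  classical
  set b := a + Pi.single ∅ (1 - ∑ s, a s)
  have hb : ∑ s, b s • incVec s = ∑ s, a s • incVec s := by
    simp [b, add_smul, Finset.sum_add_distrib, incVec_empty]
  rw [← hb, ← finsum_eq_sum_of_fintype]
  refine (convex_convexHull ℝ _).finsum_mem (fun s => ?_) ?_ (fun s hs => ?_)
  · rcases eq_or_ne s ∅ with rfl | hs
    · simpa [b] using add_nonneg (ha0 ∅) (sub_nonneg.2 ha1)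
    · simpa [b, hs] using ha0 s
  · simp [b, finsum_eq_sum_of_fintype, Finset.sum_add_distrib]
  · refine subset_convexHull ℝ _ ⟨s, ?_, rfl⟩
    rcases eq_or_ne s ∅ with rfl | hne
    · simp [IsIndep]
    · exact hind s (by simpa [b, hne] using hs)

end STAB

lemma IsFracColoring.const_mem_STAB {n : ℕ} {G : SimpleGraph (Fin n)} {w : Finset (Fin n) → ℝ}
    (hw : IsFracColoring G w) {c : ℝ} (hc0 : 0 ≤ c) (hc : c * totalWeight w ≤ 1) :
    (fun _ => c) ∈ STAB G := by
  obtain ⟨hw0, hwind, hwcov⟩ := hw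
  have hmem : ∑ s, (c * w s) • incVec s ∈ STAB G :=
    sum_smul_incVec_mem_STAB (fun s => mul_nonneg hc0 (hw0 s))
      (by rwa [← Finset.mul_sum])
      (fun s hs => hwind s (right_ne_zero_of_mul hs))
  refine mem_STAB_of_le hmem (fun _ => hc0) (fun v => ?_)
  calc c ≤ c * ∑ s, if v ∈ s then w s else 0 := le_mul_of_one_le_right hc0 (hwcov v)
    _ = (∑ s, (c * w s) • incVec s) v := by
      simp [Finset.mul_sum, incVec, mul_ite]

lemma Matrix.trace_mul_maximallyMixed_re {d r : ℕ} {P : Matrix (Fin d) (Fin d) ℂ}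
    (hP : IsProjOfRank r P) :
    ((P * ((1 / (d : ℂ)) • (1 : Matrix (Fin d) (Fin d) ℂ))).trace).re = (r : ℝ) / d := by
  rw [Matrix.mul_smul, Matrix.mul_one, Matrix.trace_smul,
    Matrix.trace_eq_rank_of_isIdempotentElem hP.2.1, hP.2.2, smul_eq_mul,
    show 1 / (d : ℂ) * r = ((r / d : ℝ) : ℂ) by push_cast; ring, Complex.ofReal_re]

theorem stmt3_general {n d : ℕ} (G : SimpleGraph (Fin n)) (r : ℕ)
    (hchi : ∃ w : Finset (Fin n) → ℝ, IsFracColoring G w ∧ totalWeight w ≤ (d : ℝ) / r) :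
    ∀ P : Fin n → Matrix (Fin d) (Fin d) ℂ,
      (∀ k, IsProjOfRank r (P k)) → Realizes G P →
        (fun k : Fin n =>
            ((P k * ((1 / (d : ℂ)) • (1 : Matrix (Fin d) (Fin d) ℂ))).trace).re) ∈ STAB G := by
  intro P hP _
  obtain ⟨w, hw, hW⟩ := hchi
  simp only [Matrix.trace_mul_maximallyMixed_re (hP _)]
  refine hw.const_mem_STAB (by positivity) ?_
  calc (r : ℝ) / d * totalWeight w ≤ r / d * (d / r) := by gcongr
    -- `(r / d) * (d / r)` is `1`, or `0` when `r` or `d` vanishes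
    _ ≤ 1 := by rw [div_mul_div_comm, mul_comm]; exact div_self_le_one _

theorem stmt3 {n d : ℕ} (G : SimpleGraph (Fin n)) (r : ℕ) (hd : 1 ≤ d) (hr : 1 ≤ r)
    (hchi : ∃ w : Finset (Fin n) → ℝ, IsFracColoring G w ∧ totalWeight w ≤ (d : ℝ) / r) :
    ∀ P : Fin n → Matrix (Fin d) (Fin d) ℂ,
      (∀ k, IsProjOfRank r (P k)) → Realizes G P →
        (fun k : Fin n =>
            ((P k * ((1 / (d : ℂ)) • (1 : Matrix (Fin d) (Fin d) ℂ))).trace).re) ∈ STAB G :=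
  stmt3_general G r hchi
end

section
/- Let G be a finite simple graph on Fin n, let d ≥ 1, r ≥ 1, and let c : Fin n → ℝ be arbitrary real coefficients. Let ρ be any density matrix on ℂ^d and let ψ be any rank-one orthogonal projection on ℂ^d (a pure state). Then for every family Π : Fin n → Matrix (Fin d) (Fin d) ℂ of rank-r orthogonal projections realizing G, there exists a family Π' of rank-r orthogonal projections realizing G such that ∑_k c_k · Re(tr(Π'_k * ψ)) ≥ ∑_k c_k · Re(tr(Π_k * ρ)). (Pure states are the most contextual states: the optimized value of any noncontextuality inequality functional at any pure state dominates its optimized value at every state.) -/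
open Matrix
open scoped ComplexOrder

/-!
A density matrix is a convex combination of rank-one projections (its spectral decomposition),
so the real-linear functional `M ↦ ∑ₖ cₖ Re tr(Πₖ M)` is at most its value at some rank-one
projection `φ`. Any two rank-one projections are unitarily conjugate, `φ = W ψ W*`, and
conjugating the whole family `Π` by `W*` keeps it a realization of `G` by rank-`r` projections
while turning its value at `φ` into its value at `ψ`.
-/

open Unitary

lemma Matrix.IsHermitian.eigenvalues_eq_zero_or_one {𝕜 ι : Type*} [RCLike 𝕜] [Fintype ι]
    [DecidableEq ι] {A : Matrix ι ι 𝕜} (hA : A.IsHermitian) (hAA : A * A = A) (i : ι) :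
    hA.eigenvalues i = 0 ∨ hA.eigenvalues i = 1 := by
  have hD := congr($(congr(conjStarAlgAut 𝕜 _ (star hA.eigenvectorUnitary) $hAA)) i i)
  rw [map_mul, hA.conjStarAlgAut_star_eigenvectorUnitary, diagonal_mul_diagonal] at hD
  refine IsIdempotentElem.iff_eq_zero_or_one.mp (show _ * _ = _ from ?_)
  simpa only [diagonal_apply_eq, Function.comp_apply, Pi.mul_apply, ← RCLike.ofReal_mul,
    RCLike.ofReal_inj] using hD

lemma Matrix.permMatrix_mem_unitaryGroup {𝕜 ι : Type*} [RCLike 𝕜] [Fintype ι] [DecidableEq ι]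
    (σ : Equiv.Perm ι) : σ.permMatrix 𝕜 ∈ unitaryGroup ι 𝕜 := by
  rw [mem_unitaryGroup_iff, star_eq_conjTranspose, conjTranspose_permMatrix, ← permMatrix_mul,
    inv_mul_cancel, permMatrix_one]

section UnitaryConjugation

variable {d : ℕ}

lemma IsProjOfRank.conj {r : ℕ} {P : Matrix (Fin d) (Fin d) ℂ} (hP : IsProjOfRank r P)
    (u : unitaryGroup (Fin d) ℂ) : IsProjOfRank r (conjStarAlgAut ℂ _ u P) := by
  obtain ⟨hherm, hidem, hrank⟩ := hP
  refine ⟨?_, by rw [← map_mul, hidem], ?_⟩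
  · rw [IsHermitian, ← star_eq_conjTranspose, ← map_star, star_eq_conjTranspose, hherm]
  · rw [conjStarAlgAut_apply, ← coe_star]
    simpa [-isUnit_iff_ne_zero, -coe_star] using hrank

lemma Realizes.conj {n : ℕ} {G : SimpleGraph (Fin n)} {P : Fin n → Matrix (Fin d) (Fin d) ℂ}
    (hP : Realizes G P) (u : unitaryGroup (Fin d) ℂ) :
    Realizes G (fun k => conjStarAlgAut ℂ _ u (P k)) := by
  intro j k hjk
  rw [← map_mul, hP j k hjk, map_zero]

lemma trace_conjStarAlgAut (u : unitaryGroup (Fin d) ℂ) (M : Matrix (Fin d) (Fin d) ℂ) :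
    (conjStarAlgAut ℂ _ u M).trace = M.trace := by
  rw [conjStarAlgAut_apply, trace_mul_cycle, coe_star_mul_self, one_mul]

lemma trace_conjStarAlgAut_star_mul (w : unitaryGroup (Fin d) ℂ)
    (P M : Matrix (Fin d) (Fin d) ℂ) :
    (conjStarAlgAut ℂ _ (star w) P * M).trace = (P * conjStarAlgAut ℂ _ w M).trace := by
  rw [← trace_conjStarAlgAut w, map_mul, ← conjStarAlgAut_symm, StarAlgEquiv.apply_symm_apply]

lemma conjStarAlgAut_permMatrix_single (σ : Equiv.Perm (Fin d)) (i : Fin d) :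
    conjStarAlgAut ℂ _ ⟨σ.permMatrix ℂ, permMatrix_mem_unitaryGroup σ⟩ (single i i 1) =
      single (σ.symm i) (σ.symm i) (1 : ℂ) := by
  rw [conjStarAlgAut_apply]
  simp [star_eq_conjTranspose, PEquiv.toMatrix_toPEquiv_mul, PEquiv.mul_toMatrix_toPEquiv]

end UnitaryConjugation

section RankOneProjections

variable {d : ℕ}

lemma isProjOfRank_single (i : Fin d) : IsProjOfRank 1 (single i i (1 : ℂ)) := by
  refine ⟨by simp [IsHermitian], by simp, ?_⟩
  rw [← diagonal_single, rank_diagonal, Fintype.card_eq_one_iff]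
  exact ⟨⟨i, by simp⟩, fun ⟨j, hj⟩ => by simpa [Pi.single_apply] using hj⟩

lemma IsProjOfRank.exists_eq_conj_single {ψ : Matrix (Fin d) (Fin d) ℂ}
    (hψ : IsProjOfRank 1 ψ) :
    ∃ (u : unitaryGroup (Fin d) ℂ) (i : Fin d), ψ = conjStarAlgAut ℂ _ u (single i i 1) := by
  obtain ⟨hH, hidem, hrank⟩ := hψ
  have hcard : Fintype.card {i // hH.eigenvalues i ≠ 0} = 1 := by
    rw [← hH.rank_eq_card_non_zero_eigs, hrank]
  obtain ⟨⟨i, hi⟩, huniq⟩ := Fintype.card_eq_one_iff.mp hcard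
  have heig : hH.eigenvalues = Pi.single i 1 := by
    funext j
    by_cases hj : j = i
    · subst hj
      simpa using (hH.eigenvalues_eq_zero_or_one hidem j).resolve_left hi
    · rw [Pi.single_eq_of_ne hj]
      by_contra hne
      exact hj congr(Subtype.val $(huniq ⟨j, hne⟩))
  refine ⟨hH.eigenvectorUnitary, i, ?_⟩
  rw [← diagonal_single]
  conv_lhs => rw [hH.spectral_theorem, heig]
  congr 2
  funext j
  by_cases hj : j = i <;> simp [hj]

lemma IsProjOfRank.exists_conj_eq {ψ φ : Matrix (Fin d) (Fin d) ℂ}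
    (hψ : IsProjOfRank 1 ψ) (hφ : IsProjOfRank 1 φ) :
    ∃ w : unitaryGroup (Fin d) ℂ, conjStarAlgAut ℂ _ w ψ = φ := by
  obtain ⟨u, i, rfl⟩ := hψ.exists_eq_conj_single
  obtain ⟨v, j, rfl⟩ := hφ.exists_eq_conj_single
  let s : unitaryGroup (Fin d) ℂ := ⟨_, permMatrix_mem_unitaryGroup (Equiv.swap i j)⟩
  refine ⟨v * s * star u, ?_⟩
  rw [conjStarAlgAut_mul_apply, conjStarAlgAut_mul_apply, ← conjStarAlgAut_symm,
    StarAlgEquiv.symm_apply_apply, conjStarAlgAut_permMatrix_single, Equiv.symm_swap,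
    Equiv.swap_apply_left]

lemma Matrix.PosSemidef.mem_convexHull_isProjOfRank_one {ρ : Matrix (Fin d) (Fin d) ℂ}
    (hρ : ρ.PosSemidef) (htr : ρ.trace = 1) :
    ρ ∈ convexHull ℝ {φ | IsProjOfRank 1 φ} := by
  have hsum : ∑ i, hρ.1.eigenvalues i = 1 := by
    have := hρ.1.trace_eq_sum_eigenvalues
    rwa [htr, ← RCLike.ofReal_sum, eq_comm, ← RCLike.ofReal_one, RCLike.ofReal_inj] at this
  have hρ_eq : ρ = ∑ i, hρ.1.eigenvalues i •
      conjStarAlgAut ℂ _ hρ.1.eigenvectorUnitary (single i i 1) := by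
    conv_lhs => rw [hρ.1.spectral_theorem, ← sum_single_eq_diagonal, map_sum]
    refine Finset.sum_congr rfl fun i _ => ?_
    rw [← Complex.coe_smul, ← map_smul, smul_single, smul_eq_mul, mul_one]
    rfl
  rw [hρ_eq]
  exact (convex_convexHull ℝ _).sum_mem (fun i _ => hρ.eigenvalues_nonneg i) hsum
    fun i _ => subset_convexHull ℝ _ ((isProjOfRank_single i).conj _)

end RankOneProjections

def weightedOverlap {n d : ℕ} (c : Fin n → ℝ) (P : Fin n → Matrix (Fin d) (Fin d) ℂ) :
    Matrix (Fin d) (Fin d) ℂ →ₗ[ℝ] ℝ where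
  toFun M := ∑ k, c k * ((P k * M).trace).re
  map_add' M N := by simp [mul_add, Finset.sum_add_distrib]
  map_smul' a M := by simp [Finset.mul_sum, mul_left_comm]

theorem stmt10_general {n d : ℕ} (G : SimpleGraph (Fin n)) (r : ℕ)
    (c : Fin n → ℝ) (ρ : Matrix (Fin d) (Fin d) ℂ) (hρ : ρ.PosSemidef) (htr : ρ.trace = 1)
    (ψ : Matrix (Fin d) (Fin d) ℂ) (hψ : IsProjOfRank 1 ψ) :
    ∀ P : Fin n → Matrix (Fin d) (Fin d) ℂ,
      (∀ k, IsProjOfRank r (P k)) → Realizes G P →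
        ∃ P' : Fin n → Matrix (Fin d) (Fin d) ℂ,
          (∀ k, IsProjOfRank r (P' k)) ∧ Realizes G P' ∧
          ∑ k : Fin n, c k * ((P k * ρ).trace).re ≤
            ∑ k : Fin n, c k * ((P' k * ψ).trace).re := by
  intro P hP hG
  obtain ⟨φ, hφ, hρφ⟩ := ((weightedOverlap c P).convexOn convex_univ).exists_ge_of_mem_convexHull
    (Set.subset_univ _) (hρ.mem_convexHull_isProjOfRank_one htr)
  obtain ⟨w, rfl⟩ := hψ.exists_conj_eq hφ
  refine ⟨fun k => conjStarAlgAut ℂ _ (star w) (P k), fun k => (hP k).conj _, hG.conj _, ?_⟩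
  simp only [trace_conjStarAlgAut_star_mul]
  exact hρφ

theorem stmt10 {n d : ℕ} (G : SimpleGraph (Fin n)) (r : ℕ) (hd : 1 ≤ d) (hr : 1 ≤ r)
    (c : Fin n → ℝ) (ρ : Matrix (Fin d) (Fin d) ℂ) (hρ : ρ.PosSemidef) (htr : ρ.trace = 1)
    (ψ : Matrix (Fin d) (Fin d) ℂ) (hψ : IsProjOfRank 1 ψ) :
    ∀ P : Fin n → Matrix (Fin d) (Fin d) ℂ,
      (∀ k, IsProjOfRank r (P k)) → Realizes G P →
        ∃ P' : Fin n → Matrix (Fin d) (Fin d) ℂ,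
          (∀ k, IsProjOfRank r (P' k)) ∧ Realizes G P' ∧
          ∑ k : Fin n, c k * ((P k * ρ).trace).re ≤
            ∑ k : Fin n, c k * ((P' k * ψ).trace).re :=
  stmt10_general G r c ρ hρ htr ψ hψ
end
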